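/- arXiv:1401.3757 — 2 statements merged into one kernel-verified Lean document; each statement's English description precedes it below -/
import Mathlib

section
/- Let 𝒞 be a small category and c an object of 𝒞. The functor from the slice category Cat/𝒞 to Cat, sending an object (𝒟, F : 𝒟 ⥤ 𝒞) to the comma category c/F and a morphism over 𝒞 to the induced functor of comma categories, admits a right adjoint; consequently it preserves all (small) colimits. -/
open CategoryTheory Limits Simplicial Opposite

noncomputable section
namespace MV

/-- `Ab` is the category of abelian groups. -/
abbrev Ab := AddCommGrpCat.{0}

/-! ### Induced functors on comma categories

Given `G : D ⥤ E` commuting with functors `H : D ⥤ C`, `K : E ⥤ C` over `C`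
(i.e. `G ⋙ K = H`) and `c : C`, we get an induced functor `c/H ⥤ c/K` on
comma (under) categories, `(d, φ : c ⟶ H d) ↦ (G d, φ)`. -/
def commaMap {D E C : Type} [SmallCategory D] [SmallCategory E] [SmallCategory C]
    (G : D ⥤ E) {H : D ⥤ C} {K : E ⥤ C} (w : G ⋙ K = H) (c : C) :
    StructuredArrow c H ⥤ StructuredArrow c K where
  obj X := StructuredArrow.mk
    (Y := G.obj X.right) (X.hom ≫ eqToHom (by subst w; rfl))
  map {X Y} g := StructuredArrow.homMk (G.map g.right) (by
    subst w
    simpa using g.w)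
  map_id X := by
    apply CommaMorphism.ext <;> simp
  map_comp f g := by
    apply CommaMorphism.ext <;> simp

/-- The functor `Cat/𝒞 ⥤ Cat` sending `F : 𝒟 ⥤ 𝒞` to the comma category `c/F`. -/
def commaFunctor (C : Type) [SmallCategory C] (c : C) : Over (Cat.of C) ⥤ Cat.{0,0} where
  obj X := Cat.of (StructuredArrow (show Cat.of C from c) X.hom.toFunctor)
  map {X Y} f := ⟨@commaMap X.left Y.left (Cat.of C) _ _ (Cat.of C).str f.left.toFunctor
    X.hom.toFunctor Y.hom.toFunctor (congrArg Cat.Hom.toFunctor (Over.w f))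
    (show Cat.of C from c)⟩
  map_id X := by
    generalize (show Cat.of C from c) = c'
    exact Cat.ext <| CategoryTheory.Functor.ext (fun Y => by
      simp only [commaMap, eqToHom_refl, Category.comp_id, Cat.Hom.id_obj]
      exact (StructuredArrow.eq_mk Y).symm) (fun A B g => by
      apply StructuredArrow.hom_ext
      erw [StructuredArrow.comp_right, StructuredArrow.comp_right, StructuredArrow.eqToHom_right,
        StructuredArrow.eqToHom_right, Functor.id_map]
      conv_rhs => erw [eqToHom_refl, eqToHom_refl, Category.id_comp, Category.comp_id]
      rfl)
  map_comp {X Y Z} f g := by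
    generalize (show Cat.of C from c) = c'
    exact Cat.ext <| CategoryTheory.Functor.ext (fun W => by
      exact congrArg StructuredArrow.mk (by erw [Category.assoc, eqToHom_trans]; rfl)) (fun A B h => by
      apply StructuredArrow.hom_ext
      erw [StructuredArrow.comp_right, StructuredArrow.comp_right, StructuredArrow.eqToHom_right,
        StructuredArrow.eqToHom_right, Functor.comp_map, eqToHom_refl, eqToHom_refl, Category.id_comp,
        Category.comp_id]
      rfl)

/-! A functor `H : c/F ⥤ 𝒳` is the same thing as a functor `d ↦ (F d, h ↦ H (d, h))` from `𝒟`
to the lax comma category `LaxComma c 𝒳` lying strictly over `𝒞`: a morphism `g : d ⟶ d'` goes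
to `F g` together with the components `H g : H (d, h) ⟶ H (d', h ≫ F g)`. Conversely, `H` is
recovered from such a functor `u` as `c/u` followed by the evaluation `(P, h) ↦ P.fiber h`.
Along a strictly commuting triangle, `c/(-)` is plain precomposition `StructuredArrow.pre`, so
this bijection is natural in `𝒟`. -/

universe v₁ v₂ v₃ u₁ u₂ u₃

lemma commaMap_eq_pre {C D E : Type} [SmallCategory C] [SmallCategory D] [SmallCategory E]
    (G : D ⥤ E) (K : E ⥤ C) (c : C) : commaMap G rfl c = StructuredArrow.pre c G K := by
  refine CategoryTheory.Functor.ext (fun W => by simp [commaMap]; rfl) fun W W' g => ?_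
  ext
  rw [StructuredArrow.comp_right, StructuredArrow.comp_right, StructuredArrow.eqToHom_right,
    StructuredArrow.eqToHom_right]
  simp [commaMap]
  exact (Category.id_comp _).symm

def overMkHomEquiv {C : Type u₁} [Category.{v₁} C] (D : Over (Cat.of C)) {E : Type u₁}
    [Category.{v₁} E] (p : E ⥤ C) :
    (D ⟶ Over.mk p.toCatHom) ≃ {u : D.left ⥤ E // u ⋙ p = D.hom.toFunctor} where
  toFun u := ⟨u.left.toFunctor, congrArg Cat.Hom.toFunctor (Over.w u)⟩
  invFun u := Over.homMk u.1.toCatHom (Cat.ext u.2)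
  left_inv _ := rfl
  right_inv _ := rfl

structure LaxComma {C : Type u₁} [Category.{v₁} C] (c : C) (X : Type u₂) where
  base : C
  fiber : (c ⟶ base) → X

namespace LaxComma

section Category

variable {C : Type u₁} [Category.{v₁} C] {c : C} {X : Type u₂} [Category.{v₂} X]

structure Hom (P Q : LaxComma c X) where
  base : P.base ⟶ Q.base
  fiber (h : c ⟶ P.base) : P.fiber h ⟶ Q.fiber (h ≫ base)

lemma Hom.ext {P Q : LaxComma c X} {α β : Hom P Q} (hb : α.base = β.base)
    (hf : ∀ h, α.fiber h = β.fiber h ≫ eqToHom (by rw [hb])) : α = β := by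
  obtain ⟨f, t⟩ := α
  obtain ⟨f', t'⟩ := β
  obtain rfl : f = f' := hb
  simpa [funext_iff] using hf

lemma Hom.fiber_congr_arg {P Q : LaxComma c X} (α : Hom P Q) {h h' : c ⟶ P.base} (e : h = h') :
    α.fiber h = eqToHom (by rw [e]) ≫ α.fiber h' ≫ eqToHom (by rw [e]) := by
  subst e
  simp

lemma Hom.congr_fiber {P Q : LaxComma c X} {α β : Hom P Q} (e : α = β) (h : c ⟶ P.base) :
    α.fiber h = β.fiber h ≫ eqToHom (by rw [e]) := by
  subst e
  simp

instance : Category (LaxComma c X) where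
  Hom := Hom
  id P := ⟨𝟙 _, fun h => eqToHom (congrArg P.fiber (Category.comp_id h).symm)⟩
  comp α β := ⟨α.base ≫ β.base,
    fun h => α.fiber h ≫ β.fiber (h ≫ α.base) ≫ eqToHom (by rw [Category.assoc])⟩
  id_comp α := by
    refine Hom.ext (Category.id_comp _) fun h => ?_
    dsimp only
    rw [α.fiber_congr_arg (Category.comp_id h)]
    simp only [Category.assoc, eqToHom_trans, eqToHom_trans_assoc, eqToHom_refl, Category.id_comp]
  comp_id α := Hom.ext (Category.comp_id _) fun h => by simp
  assoc α β γ := by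
    refine Hom.ext (Category.assoc _ _ _) fun h => ?_
    dsimp only
    rw [γ.fiber_congr_arg (Category.assoc h α.base β.base)]
    simp only [Category.assoc, eqToHom_trans]

@[simp] lemma id_base (P : LaxComma c X) : Hom.base (𝟙 P) = 𝟙 P.base := rfl
@[simp] lemma id_fiber (P : LaxComma c X) (h : c ⟶ P.base) :
    Hom.fiber (𝟙 P) h = eqToHom (by simp) := rfl
@[simp] lemma comp_base {P Q R : LaxComma c X} (α : P ⟶ Q) (β : Q ⟶ R) :
    (α ≫ β).base = α.base ≫ β.base := rfl
@[simp] lemma comp_fiber {P Q R : LaxComma c X} (α : P ⟶ Q) (β : Q ⟶ R) (h : c ⟶ P.base) :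
    (α ≫ β).fiber h = α.fiber h ≫ β.fiber (h ≫ α.base) ≫ eqToHom (by simp) := rfl

-- Reducible, so that `W.hom : c ⟶ (proj c X).obj W.right` is accepted as an argument of
-- `W.right.fiber` by `rw` and `simp`.
variable (c X) in
abbrev proj : LaxComma c X ⥤ C where
  obj P := P.base
  map α := α.base

end Category

section FunctorEquiv

variable {C : Type u₁} [Category.{v₁} C] (c : C) {X : Type u₂} [Category.{v₂} X]
  {D : Type u₃} [Category.{v₃} D]

def lift {F : D ⥤ C} (H : StructuredArrow c F ⥤ X) : D ⥤ LaxComma c X where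
  obj d := ⟨F.obj d, fun h => H.obj (StructuredArrow.mk h)⟩
  map g := ⟨F.map g, fun h => H.map (StructuredArrow.homMk g)⟩
  map_id d := by
    refine Hom.ext (F.map_id d) fun h => ?_
    have e : StructuredArrow.mk h = StructuredArrow.mk (h ≫ F.map (𝟙 d)) := by simp
    have : (StructuredArrow.homMk (𝟙 d) :
        StructuredArrow.mk h ⟶ StructuredArrow.mk (h ≫ F.map (𝟙 d))) = eqToHom e := by
      ext
      simp [StructuredArrow.eqToHom_right]
    simp [this, eqToHom_map]
  map_comp g g' := by
    refine Hom.ext (F.map_comp g g') fun h => ?_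
    have e : StructuredArrow.mk ((h ≫ F.map g) ≫ F.map g') =
        StructuredArrow.mk (h ≫ F.map (g ≫ g')) := by simp
    simp only [comp_fiber, Category.assoc, eqToHom_trans]
    rw [← eqToHom_map H e, ← H.map_comp, ← H.map_comp]
    congr 1
    ext
    simp [StructuredArrow.eqToHom_right]

variable (X) in
def ev : StructuredArrow c (proj c X) ⥤ X where
  obj W := W.right.fiber W.hom
  map {W W'} g := g.right.fiber W.hom ≫ eqToHom (congrArg _ (StructuredArrow.w g))
  map_id W := by
    rw [Hom.congr_fiber (StructuredArrow.id_right W)]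
    simp
  map_comp g g' := by
    rw [Hom.congr_fiber (StructuredArrow.comp_right g g'), comp_fiber,
      g'.right.fiber_congr_arg (StructuredArrow.w g)]
    simp

lemma lift_pre_comp_ev (u : D ⥤ LaxComma c X) :
    lift c (StructuredArrow.pre c u (proj c X) ⋙ ev c X) = u := by
  refine CategoryTheory.Functor.ext (fun d => rfl) fun d d' g => ?_
  change _ = 𝟙 _ ≫ u.map g ≫ 𝟙 _
  rw [Category.id_comp, Category.comp_id]
  exact Hom.ext rfl fun h => rfl

lemma pre_lift_comp_ev {F : D ⥤ C} (H : StructuredArrow c F ⥤ X) :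
    H = StructuredArrow.pre c (lift c H) (proj c X) ⋙ ev c X := by
  refine CategoryTheory.Functor.ext (fun W => rfl) fun W W' g => ?_
  have e : StructuredArrow.mk (W.hom ≫ F.map g.right) = W' :=
    (congrArg StructuredArrow.mk (StructuredArrow.w g)).trans (StructuredArrow.eq_mk W').symm
  change H.map g = 𝟙 _ ≫ (H.map (StructuredArrow.homMk g.right :
    W ⟶ StructuredArrow.mk (W.hom ≫ F.map g.right)) ≫ eqToHom (congrArg H.obj e)) ≫ 𝟙 _
  rw [Category.id_comp, Category.comp_id, ← eqToHom_map H e, ← H.map_comp]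
  congr 1
  ext
  simp [StructuredArrow.eqToHom_right]

-- The transport along `u ⋙ proj c X = F` is trivial on `lift c H`, where the equation is `rfl`.
variable (X) in
def functorEquiv (F : D ⥤ C) :
    {u : D ⥤ LaxComma c X // u ⋙ proj c X = F} ≃ (StructuredArrow c F ⥤ X) where
  toFun u := u.2 ▸ (StructuredArrow.pre c u.1 (proj c X) ⋙ ev c X)
  invFun H := ⟨lift c H, rfl⟩
  left_inv := by
    rintro ⟨u, rfl⟩
    exact Subtype.ext (lift_pre_comp_ev c u)
  right_inv H := (pre_lift_comp_ev c H).symm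

end FunctorEquiv

lemma functorEquiv_comp {C D D' X : Type} [SmallCategory C] [SmallCategory D]
    [SmallCategory D'] [SmallCategory X] (c : C) (G : D' ⥤ D) {F : D ⥤ C} {F' : D' ⥤ C}
    (w : G ⋙ F = F') (u : {u : D ⥤ LaxComma c X // u ⋙ proj c X = F}) :
    functorEquiv c X F' ⟨G ⋙ u.1, (congrArg (G ⋙ ·) u.2).trans w⟩ =
      commaMap G w c ⋙ functorEquiv c X F u := by
  obtain ⟨u, rfl⟩ := u
  subst w
  rw [commaMap_eq_pre]
  rfl

end LaxComma

section Adjunction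

variable (C : Type) [SmallCategory C] (c : C)

def laxCommaOver (X : Cat.{0, 0}) : Over (Cat.of C) :=
  Over.mk (LaxComma.proj c X).toCatHom

def commaFunctorHomEquiv (D : Over (Cat.of C)) (X : Cat.{0, 0}) :
    ((commaFunctor C c).obj D ⟶ X) ≃ (D ⟶ laxCommaOver C c X) :=
  (Cat.Hom.equivFunctor _ _).trans ((LaxComma.functorEquiv c X D.hom.toFunctor).symm.trans
    (overMkHomEquiv D (LaxComma.proj c X)).symm)

lemma commaFunctorHomEquiv_naturality {D' D : Over (Cat.of C)} {X : Cat.{0, 0}} (m : D' ⟶ D)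
    (g : (commaFunctor C c).obj D ⟶ X) :
    commaFunctorHomEquiv C c D' X ((commaFunctor C c).map m ≫ g) =
      m ≫ commaFunctorHomEquiv C c D X g := by
  have symm_comp (u : D ⟶ laxCommaOver C c X) :
      (commaFunctorHomEquiv C c D' X).symm (m ≫ u) =
        (commaFunctor C c).map m ≫ (commaFunctorHomEquiv C c D X).symm u :=
    Cat.ext (LaxComma.functorEquiv_comp (X := X) c m.left.toFunctor
      (congrArg Cat.Hom.toFunctor (Over.w m)) (overMkHomEquiv D (LaxComma.proj c X) u))
  rw [← Equiv.eq_symm_apply, symm_comp, Equiv.symm_apply_apply]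

def laxCommaFunctor : Cat.{0, 0} ⥤ Over (Cat.of C) :=
  Adjunction.rightAdjointOfEquiv (commaFunctorHomEquiv C c)
    fun _ _ _ => commaFunctorHomEquiv_naturality C c

def commaFunctorAdjunction : commaFunctor C c ⊣ laxCommaFunctor C c :=
  Adjunction.adjunctionOfEquivRight (commaFunctorHomEquiv C c)
    fun _ _ _ => commaFunctorHomEquiv_naturality C c

end Adjunction

/-- For a small category `C` and `c : C`, the functor `Cat/𝒞 ⥤ Cat`,
`(𝒟, F : 𝒟 ⥤ 𝒞) ↦ c/F`, admits a right adjoint; consequently it preserves all small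
colimits. -/
theorem commaFunctor_isLeftAdjoint (C : Type) [SmallCategory C] (c : C) :
    (commaFunctor C c).IsLeftAdjoint ∧ Nonempty (PreservesColimits (commaFunctor C c)) :=
  ⟨(commaFunctorAdjunction C c).isLeftAdjoint,
    ⟨(commaFunctorAdjunction C c).leftAdjoint_preservesColimits⟩⟩

end MV
end
end

section
/- Let F : 𝒟 ⥤ 𝒞 be a functor between small categories and let n ≥ 0. The right 𝒞-module sending an object c to the free abelian group on the set of n-simplices of the nerve of the comma category c/F (with contravariant functoriality in c induced by the functors c/F ⥤ c′/F) is a projective object of the functor category 𝒞ᵒᵖ ⥤ Ab. -/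
open CategoryTheory Limits Simplicial Opposite

noncomputable section
namespace MV

/-! ### The chain complex of right `C`-modules `ℤN(−/F)` -/

variable {D C : Type} [SmallCategory D] [SmallCategory C]

/-- The functor `Cᵒᵖ ⥤ Cat` sending `c` to the comma category `c/F`. -/
def underCat (F : D ⥤ C) : Cᵒᵖ ⥤ Cat.{0,0} where
  obj c := Cat.of (StructuredArrow c.unop F)
  map f := (StructuredArrow.map f.unop).toCatHom
  map_id c := Cat.ext (CategoryTheory.Functor.ext (fun X => StructuredArrow.map_id)
    (fun X Y f => by
      apply StructuredArrow.hom_ext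
      erw [StructuredArrow.comp_right, StructuredArrow.comp_right,
        StructuredArrow.eqToHom_right, StructuredArrow.eqToHom_right]
      simp [StructuredArrow.map, Comma.mapLeft]
      rfl))
  map_comp f g := Cat.ext (CategoryTheory.Functor.ext (fun X => StructuredArrow.map_comp)
    (fun X Y f => by
      apply StructuredArrow.hom_ext
      erw [StructuredArrow.comp_right, StructuredArrow.comp_right,
        StructuredArrow.eqToHom_right, StructuredArrow.eqToHom_right]
      simp [StructuredArrow.map, Comma.mapLeft]
      rfl))

/-- The functor `Cᵒᵖ ⥤ SSet` sending `c` to the nerve `N(c/F)`. -/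
def underSSet (F : D ⥤ C) : Cᵒᵖ ⥤ SSet.{0} := underCat F ⋙ nerveFunctor

/-- `c ↦ ℤN(c/F)`, the free simplicial abelian group on the nerve of `c/F`. -/
def underSAb (F : D ⥤ C) : Cᵒᵖ ⥤ SimplicialObject Ab :=
  underSSet F ⋙ (Functor.whiskeringRight SimplexCategoryᵒᵖ (Type 0) Ab).obj AddCommGrpCat.free

/-- The chain complex of right `C`-modules `ℤN(−/F)`: at an object `c` and in degree `n`
it is the free abelian group on the `n`-simplices of the nerve of `c/F`, with
differentials the alternating sums of face maps. -/
def ZNerve (F : D ⥤ C) : ChainComplex (Cᵒᵖ ⥤ Ab) ℕ :=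
  (AlgebraicTopology.alternatingFaceMapComplex (Cᵒᵖ ⥤ Ab)).obj (underSAb F).flip

end MV

/-!
An `n`-simplex of `N(c/F)` amounts, naturally in `c`, to a string `σ` of `n` composable arrows
of `D` together with an arrow `c ⟶ F(σ 0)`: it is the pullback along that arrow of the universal
simplex of `N(F(σ 0)/F)` lying over `σ`. So the presheaf of `n`-simplices is a coproduct of
representables, hence projective, and the free abelian group functor preserves projectives
because its right adjoint, the forgetful functor, preserves epimorphisms.
-/

universe u v

namespace CategoryTheory

section SigmaYoneda

variable {C : Type u} [Category.{v} C]

/-- The coproduct `∐ i, yoneda.obj (X i)`, computed objectwise. -/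
def sigmaYoneda {I : Type v} (X : I → C) : Cᵒᵖ ⥤ Type v where
  obj c := Σ i, (c.unop ⟶ X i)
  map g := TypeCat.ofHom fun s => ⟨s.1, g.unop ≫ s.2⟩

instance projective_sigmaYoneda {I : Type v} (X : I → C) : Projective (sigmaYoneda X) where
  factors {M N} f e _ := by
    have lift_identity : ∀ i, ∃ m : M.obj (op (X i)),
        e.app _ m = f.app _ (⟨i, 𝟙 _⟩ : (sigmaYoneda X).obj (op (X i))) := fun i =>
      (epi_iff_surjective _).mp ((NatTrans.epi_iff_epi_app e).mp inferInstance _) _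
    choose m hm using lift_identity
    refine ⟨⟨fun c => TypeCat.ofHom fun s => M.map s.2.op (m s.1), ?_⟩, ?_⟩
    · intro c c' g
      ext s
      change M.map (g.unop ≫ s.2).op (m s.1) = M.map g (M.map s.2.op (m s.1))
      rw [op_comp, Functor.map_comp_apply]
      rfl
    · ext c ⟨i, φ⟩
      change e.app c (M.map φ.op (m i)) = f.app c ⟨i, φ⟩
      rw [NatTrans.naturality_apply, hm]
      exact (NatTrans.naturality_apply f φ.op _).symm.trans
        (congrArg (f.app c) (Sigma.ext rfl (heq_of_eq (Category.comp_id φ))))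

end SigmaYoneda

instance {K C D : Type*} [Category K] [Category C] [Category D] [HasPushouts C]
    (H : C ⥤ D) [H.PreservesEpimorphisms] :
    ((Functor.whiskeringRight K C D).obj H).PreservesEpimorphisms where
  preserves f _ := inferInstanceAs (Epi (Functor.whiskerRight f H))

section ToStructuredArrow

variable {C D E : Type*} [Category C] [Category D] [Category E]

lemma Functor.toStructuredArrow_congr (G : E ⥤ C) (X : D) (F : C ⥤ D)
    {f f' : (Y : E) → X ⟶ F.obj (G.obj Y)} (hf : f = f')
    (h : ∀ {Y Z : E} (g : Y ⟶ Z), f Y ≫ F.map (G.map g) = f Z) :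
    G.toStructuredArrow X F f h = G.toStructuredArrow X F f' (hf ▸ h) := by
  subst hf
  rfl

lemma Functor.eq_toStructuredArrow {X : D} {F : C ⥤ D} (s : E ⥤ StructuredArrow X F) :
    s = (s ⋙ StructuredArrow.proj X F).toStructuredArrow X F
      (fun i => (s.obj i).hom) (fun g => StructuredArrow.w (s.map g)) := by
  refine Functor.ext (fun _ => rfl) (fun _ _ g => ?_)
  erw [eqToHom_refl, eqToHom_refl, Category.comp_id, Category.id_comp]
  exact StructuredArrow.hom_ext _ _ rfl

end ToStructuredArrow

end CategoryTheory

namespace MV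

variable {D C : Type} [SmallCategory D] [SmallCategory C]

def universalSimplex (F : D ⥤ C) {n : ℕ} (σ : ComposableArrows D n) :
    ComposableArrows (StructuredArrow (F.obj (σ.obj 0)) F) n :=
  σ.toStructuredArrow (F.obj (σ.obj 0)) F
    (fun i => F.map (σ.map (homOfLE (Fin.zero_le i))))
    (fun {_ _} g => by
      rw [← F.map_comp, ← σ.map_comp]
      exact congrArg (F.map ∘ σ.map) (Subsingleton.elim _ _))

lemma universalSimplex_comp_map_obj_zero_hom (F : D ⥤ C) {n : ℕ} (σ : ComposableArrows D n)
    {c : C} (φ : c ⟶ F.obj (σ.obj 0)) :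
    ((universalSimplex F σ ⋙ StructuredArrow.map φ).obj 0).hom = φ := by
  change φ ≫ F.map (σ.map (homOfLE _)) = φ
  rw [Subsingleton.elim (homOfLE _) (𝟙 (0 : Fin (n + 1))), σ.map_id, F.map_id, Category.comp_id]

lemma eq_universalSimplex_comp_map (F : D ⥤ C) {n : ℕ} {c : C}
    (s : ComposableArrows (StructuredArrow c F) n) :
    s = universalSimplex F (s ⋙ StructuredArrow.proj c F) ⋙ StructuredArrow.map (s.obj 0).hom :=
  (Functor.eq_toStructuredArrow s).trans <| Functor.toStructuredArrow_congr _ _ _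
    (funext fun i => (StructuredArrow.w (s.map (homOfLE (Fin.zero_le i)))).symm) _

def underSimplices (F : D ⥤ C) (n : ℕ) : Cᵒᵖ ⥤ Type :=
  underSSet F ⋙ (evaluation SimplexCategoryᵒᵖ Type).obj (op ⦋n⦌)

def underSimplicesIsoSigmaYoneda (F : D ⥤ C) (n : ℕ) :
    underSimplices F n ≅ sigmaYoneda (fun σ : ComposableArrows D n => F.obj (σ.obj 0)) :=
  NatIso.ofComponents (fun c => Equiv.toIso
    { toFun s := ⟨s ⋙ StructuredArrow.proj c.unop F, (s.obj 0).hom⟩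
      invFun s := universalSimplex F s.1 ⋙ StructuredArrow.map s.2
      left_inv s := (eq_universalSimplex_comp_map F s).symm
      right_inv s := Sigma.ext rfl
        (heq_of_eq (universalSimplex_comp_map_obj_zero_hom F s.1 s.2)) })
    (fun _ => rfl)

instance projective_underSimplices (F : D ⥤ C) (n : ℕ) : Projective (underSimplices F n) :=
  Projective.of_iso (underSimplicesIsoSigmaYoneda F n).symm inferInstance

/-- **Statement 6.** For a functor `F : D ⥤ C` between small categories, the right
`C`-module `c ↦ ℤ[n-simplices of the nerve of c/F]` is a projective object of `Cᵒᵖ ⥤ Ab`. -/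
theorem zNerve_degreewise_projective
    {D C : Type} [SmallCategory D] [SmallCategory C] (F : D ⥤ C) (n : ℕ) :
    Projective ((ZNerve F).X n) :=
  show Projective (underSimplices F n ⋙ AddCommGrpCat.free) from
    (AddCommGrpCat.adj.whiskerRight Cᵒᵖ).map_projective _ inferInstance

end MV
end
end
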